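/- Let G be a group and let B be a G-graded category over a commutative ring k. Then the skew category (B#G)[G] of the smash product category B#G (with its canonical free G-action) is equivalent to B. -/

import Mathlib

/-! Basic notion of a (small) category over a commutative ring `k`:
objects form a type, morphism sets are `k`-modules and composition is `k`-bilinear. -/

structure kCat (k : Type) [CommRing k] where
  Obj : Type
  Hom : Obj → Obj → Type
  [homAdd : ∀ x y, AddCommGroup (Hom x y)]
  [homMod : ∀ x y, Module k (Hom x y)]
  id : ∀ x, Hom x x
  comp : ∀ {x y z}, Hom y z → Hom x y → Hom x z
  id_comp : ∀ {x y} (f : Hom x y), comp (id y) f = f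
  comp_id : ∀ {x y} (f : Hom x y), comp f (id x) = f
  assoc : ∀ {w x y z} (h : Hom y z) (g : Hom x y) (f : Hom w x),
    comp (comp h g) f = comp h (comp g f)
  comp_add_left : ∀ {x y z} (g g' : Hom y z) (f : Hom x y),
    comp (g + g') f = comp g f + comp g' f
  comp_add_right : ∀ {x y z} (g : Hom y z) (f f' : Hom x y),
    comp g (f + f') = comp g f + comp g f'
  comp_smul_left : ∀ {x y z} (a : k) (g : Hom y z) (f : Hom x y),
    comp (a • g) f = a • comp g f
  comp_smul_right : ∀ {x y z} (a : k) (g : Hom y z) (f : Hom x y),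
    comp g (a • f) = a • comp g f

attribute [instance] kCat.homAdd kCat.homMod

/-- Transport of a morphism along equalities of its source and target. -/
def kCat.trans2 {k : Type} [CommRing k] (C : kCat k) {x x' y y' : C.Obj}
    (hx : x = x') (hy : y = y') (f : C.Hom x y) : C.Hom x' y' :=
  cast (by rw [hx, hy]) f

/-- A `k`-linear functor between categories over `k`. -/
structure kFunctor (k : Type) [CommRing k] (C D : kCat k) where
  obj : C.Obj → D.Obj
  map : ∀ x y, C.Hom x y →ₗ[k] D.Hom (obj x) (obj y)
  map_id : ∀ x, map x x (C.id x) = D.id (obj x)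
  map_comp : ∀ {x y z} (g : C.Hom y z) (f : C.Hom x y),
    map x z (C.comp g f) = D.comp (map y z g) (map x y f)

/-- The identity functor. -/
def kFunctor.idF (k : Type) [CommRing k] (C : kCat k) : kFunctor k C C where
  obj := fun x => x
  map := fun _ _ => LinearMap.id
  map_id := fun _ => rfl
  map_comp := fun _ _ => rfl

/-- Composition of `k`-linear functors. -/
def kFunctor.compF {k : Type} [CommRing k] {C D E : kCat k}
    (F : kFunctor k D E) (H : kFunctor k C D) : kFunctor k C E where
  obj := fun x => F.obj (H.obj x)
  map := fun x y => (F.map _ _).comp (H.map x y)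
  map_id := fun x => by simp [H.map_id, F.map_id]
  map_comp := fun g f => by simp [H.map_comp, F.map_comp]

/-- A natural transformation between `k`-linear functors. -/
structure kNatTrans {k : Type} [CommRing k] {C D : kCat k} (F G : kFunctor k C D) where
  app : ∀ x, D.Hom (F.obj x) (G.obj x)
  naturality : ∀ {x y} (f : C.Hom x y),
    D.comp (app y) (F.map x y f) = D.comp (G.map x y f) (app x)

/-- A natural isomorphism between `k`-linear functors, given by a pair of mutually
inverse natural transformations. -/
structure kNatIso {k : Type} [CommRing k] {C D : kCat k} (F G : kFunctor k C D) where
  hom : kNatTrans F G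
  inv : kNatTrans G F
  hom_inv : ∀ x, D.comp (inv.app x) (hom.app x) = D.id (F.obj x)
  inv_hom : ∀ x, D.comp (hom.app x) (inv.app x) = D.id (G.obj x)

/-- An equivalence of categories over `k`. -/
structure kEquivalence (k : Type) [CommRing k] (C D : kCat k) where
  F : kFunctor k C D
  G : kFunctor k D C
  unitIso : kNatIso (kFunctor.idF k C) (kFunctor.compF G F)
  counitIso : kNatIso (kFunctor.compF F G) (kFunctor.idF k D)

/-- An isomorphism of categories over `k`: a `k`-linear functor which is bijective on
objects and bijective (hence a `k`-module isomorphism) on each morphism module. -/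
structure kCatIso (k : Type) [CommRing k] (C D : kCat k) where
  F : kFunctor k C D
  objBij : Function.Bijective F.obj
  homBij : ∀ x y, Function.Bijective (F.map x y)

/-- The full subcategory on the objects satisfying a predicate `P`. -/
def kCat.fullSub {k : Type} [CommRing k] (C : kCat k) (P : C.Obj → Prop) : kCat k where
  Obj := { x : C.Obj // P x }
  Hom := fun x y => C.Hom x.1 y.1
  homAdd := fun _ _ => inferInstance
  homMod := fun _ _ => inferInstance
  id := fun x => C.id x.1
  comp := fun g f => C.comp g f
  id_comp := fun f => C.id_comp f
  comp_id := fun f => C.comp_id f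
  assoc := fun h g f => C.assoc h g f
  comp_add_left := fun g g' f => C.comp_add_left g g' f
  comp_add_right := fun g f f' => C.comp_add_right g f f'
  comp_smul_left := fun a g f => C.comp_smul_left a g f
  comp_smul_right := fun a g f => C.comp_smul_right a g f

/-- The inclusion functor of a full subcategory. -/
def kCat.inclFunctor {k : Type} [CommRing k] (C : kCat k) (P : C.Obj → Prop) :
    kFunctor k (C.fullSub P) C where
  obj := fun x => x.1
  map := fun _ _ => LinearMap.id
  map_id := fun _ => rfl
  map_comp := fun _ _ => rfl

/-! Direct sum helpers. -/

open DirectSum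

/-- The element of a direct sum concentrated in one component. -/
noncomputable def dsSingle {ι : Type} {M : ι → Type} [∀ i, AddCommGroup (M i)]
    (i : ι) (m : M i) : ⨁ i, M i :=
  letI := Classical.decEq ι
  DFinsupp.single i m

/-- The linear inclusion of one component into a direct sum. -/
noncomputable def dsLof (k : Type) [CommRing k] {ι : Type} (M : ι → Type)
    [∀ i, AddCommGroup (M i)] [∀ i, Module k (M i)] (i : ι) : M i →ₗ[k] ⨁ i, M i :=
  letI := Classical.decEq ι
  DirectSum.lof k ι M i

/-- A family of submodules of `M` is *internal* (i.e. `M` is their internal direct sum)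
when the canonical summation map from the direct sum of the submodules to `M`
is bijective. -/
def SubmodulesInternal (k : Type) [CommRing k] {ι : Type} {M : Type}
    [AddCommGroup M] [Module k M] (p : ι → Submodule k M) : Prop :=
  letI := Classical.decEq ι
  Function.Bijective
    (⇑(DFinsupp.sumAddHom (β := fun i => ↥(p i)) fun i => ((p i).subtype).toAddMonoidHom))

/-! `G`-categories over `k`, free actions, the quotient (orbit) category of a free
`G`-category, and the skew category. -/

/-- An action of a group `G` on a category `C` over `k`: an action on objects together
with `k`-linear maps on morphism modules, compatible with composition, identities and
the group law. -/
structure GAction (k G : Type) [CommRing k] [Group G] (C : kCat k) where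
  smulObj : G → C.Obj → C.Obj
  one_smulObj : ∀ x, smulObj 1 x = x
  mul_smulObj : ∀ s t x, smulObj (s * t) x = smulObj s (smulObj t x)
  smulHom : ∀ (s : G) (x y : C.Obj), C.Hom x y →ₗ[k] C.Hom (smulObj s x) (smulObj s y)
  smulHom_comp : ∀ (s : G) {x y z} (g : C.Hom y z) (f : C.Hom x y),
    smulHom s x z (C.comp g f) = C.comp (smulHom s y z g) (smulHom s x y f)
  smulHom_id : ∀ (s : G) (x), smulHom s x x (C.id x) = C.id (smulObj s x)
  one_smulHom : ∀ {x y} (f : C.Hom x y), HEq (smulHom 1 x y f) f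
  mul_smulHom : ∀ (s t : G) {x y} (f : C.Hom x y),
    HEq (smulHom (s * t) x y f) (smulHom s _ _ (smulHom t x y f))

namespace GAction

variable {k G : Type} [CommRing k] [Group G] {C : kCat k}

/-- The action is free when no nontrivial group element fixes an object. -/
def IsFree (A : GAction k G C) : Prop := ∀ (s : G) (x : C.Obj), A.smulObj s x = x → s = 1

/-- The orbit equivalence relation on objects. -/
def orbitSetoid (A : GAction k G C) : Setoid C.Obj where
  r x y := ∃ s : G, A.smulObj s x = y
  iseqv := by
    refine ⟨fun x => ⟨1, A.one_smulObj x⟩, ?_, ?_⟩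
    · rintro x y ⟨s, h⟩
      exact ⟨s⁻¹, by rw [← h, ← A.mul_smulObj, inv_mul_cancel, A.one_smulObj]⟩
    · rintro x y z ⟨s, h⟩ ⟨t, h'⟩
      exact ⟨t * s, by rw [A.mul_smulObj, h, h']⟩

/-- The set of `G`-orbits of objects. -/
def QuotObj (A : GAction k G C) : Type := Quotient A.orbitSetoid

/-- The orbit of an object. -/
def orb (A : GAction k G C) (x : C.Obj) : A.QuotObj := Quotient.mk A.orbitSetoid x

theorem orb_smul (A : GAction k G C) (s : G) (x : C.Obj) :
    A.orb (A.smulObj s x) = A.orb x :=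
  (Quotient.sound ⟨s, rfl⟩ : A.orb x = A.orb (A.smulObj s x)).symm

/-- The index type of pairs `(x, y)` with `x` in the orbit `α` and `y` in the orbit `β`. -/
def PairIdx (A : GAction k G C) (α β : A.QuotObj) : Type :=
  { x : C.Obj // A.orb x = α } × { y : C.Obj // A.orb y = β }

/-- The direct sum `⊕_{x ∈ α, y ∈ β} Hom_C(x, y)`. -/
def HomSum (A : GAction k G C) (α β : A.QuotObj) : Type :=
  ⨁ p : A.PairIdx α β, C.Hom p.1.1 p.2.1

noncomputable instance (A : GAction k G C) (α β : A.QuotObj) :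
    AddCommGroup (A.HomSum α β) :=
  inferInstanceAs (AddCommGroup (⨁ p : A.PairIdx α β, C.Hom p.1.1 p.2.1))

noncomputable instance (A : GAction k G C) (α β : A.QuotObj) :
    Module k (A.HomSum α β) :=
  inferInstanceAs (Module k (⨁ p : A.PairIdx α β, C.Hom p.1.1 p.2.1))

/-- The element of `HomSum` concentrated in the component indexed by `(x, y)`. -/
noncomputable def homSumSingle (A : GAction k G C) {α β : A.QuotObj} {x y : C.Obj}
    (hx : A.orb x = α) (hy : A.orb y = β) (f : C.Hom x y) : A.HomSum α β :=
  dsSingle (M := fun p : A.PairIdx α β => C.Hom p.1.1 p.2.1) ⟨⟨x, hx⟩, ⟨y, hy⟩⟩ f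

/-- The submodule of `HomSum` spanned by the elements `s • f - f`; quotienting by it
produces the largest quotient on which `G` acts trivially. -/
noncomputable def gSub (A : GAction k G C) (α β : A.QuotObj) :
    Submodule k (A.HomSum α β) :=
  Submodule.span k
    {z | ∃ (s : G) (x y : C.Obj) (hx : A.orb x = α) (hy : A.orb y = β) (f : C.Hom x y),
      z = A.homSumSingle ((A.orb_smul s x).trans hx) ((A.orb_smul s y).trans hy)
            (A.smulHom s x y f)
          - A.homSumSingle hx hy f}

/-- The morphism module of the quotient category `C/G` from the orbit `α` to the
orbit `β`. -/
def QuotHom (A : GAction k G C) (α β : A.QuotObj) : Type :=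
  A.HomSum α β ⧸ A.gSub α β

noncomputable instance (A : GAction k G C) (α β : A.QuotObj) :
    AddCommGroup (A.QuotHom α β) :=
  inferInstanceAs (AddCommGroup (A.HomSum α β ⧸ A.gSub α β))

noncomputable instance (A : GAction k G C) (α β : A.QuotObj) :
    Module k (A.QuotHom α β) :=
  inferInstanceAs (Module k (A.HomSum α β ⧸ A.gSub α β))

/-- The `k`-linear map sending a morphism `f : x → y` of `C` to its class in the
morphism module of the quotient category. -/
noncomputable def projL (A : GAction k G C) {α β : A.QuotObj} {x y : C.Obj}
    (hx : A.orb x = α) (hy : A.orb y = β) : C.Hom x y →ₗ[k] A.QuotHom α β :=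
  (A.gSub α β).mkQ.comp
    (letI := Classical.decEq (A.PairIdx α β)
     DirectSum.lof k (A.PairIdx α β) (fun p => C.Hom p.1.1 p.2.1) ⟨⟨x, hx⟩, ⟨y, hy⟩⟩)

/-- The class of a morphism `f : x → y` of `C` in the quotient category. -/
noncomputable def proj (A : GAction k G C) {α β : A.QuotObj} {x y : C.Obj}
    (hx : A.orb x = α) (hy : A.orb y = β) (f : C.Hom x y) : A.QuotHom α β :=
  A.projL hx hy f

end GAction

/-- The structure of the quotient category `C/G` of a (free) `G`-category `C` over `k`:
its objects are the `G`-orbits of objects of `C`, its morphism modules are the modules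
`QuotHom`, and its composition and identities are induced by those of `C` via the
projection, making it a category over `k`. -/
structure QuotStr {k G : Type} [CommRing k] [Group G] {C : kCat k} (A : GAction k G C) where
  comp : ∀ {α β γ : A.QuotObj}, A.QuotHom β γ → A.QuotHom α β → A.QuotHom α γ
  id : ∀ α : A.QuotObj, A.QuotHom α α
  id_comp : ∀ {α β} (f : A.QuotHom α β), comp (id β) f = f
  comp_id : ∀ {α β} (f : A.QuotHom α β), comp f (id α) = f
  assoc : ∀ {α β γ δ} (h : A.QuotHom γ δ) (g : A.QuotHom β γ) (f : A.QuotHom α β),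
    comp (comp h g) f = comp h (comp g f)
  comp_add_left : ∀ {α β γ} (g g' : A.QuotHom β γ) (f : A.QuotHom α β),
    comp (g + g') f = comp g f + comp g' f
  comp_add_right : ∀ {α β γ} (g : A.QuotHom β γ) (f f' : A.QuotHom α β),
    comp g (f + f') = comp g f + comp g f'
  comp_smul_left : ∀ {α β γ} (a : k) (g : A.QuotHom β γ) (f : A.QuotHom α β),
    comp (a • g) f = a • comp g f
  comp_smul_right : ∀ {α β γ} (a : k) (g : A.QuotHom β γ) (f : A.QuotHom α β),
    comp g (a • f) = a • comp g f
  comp_proj : ∀ {α β γ} {x y z : C.Obj}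
    (hx : A.orb x = α) (hy : A.orb y = β) (hz : A.orb z = γ)
    (g : C.Hom y z) (f : C.Hom x y),
    comp (A.proj hy hz g) (A.proj hx hy f) = A.proj hx hz (C.comp g f)
  id_proj : ∀ {α} {x : C.Obj} (hx : A.orb x = α), id α = A.proj hx hx (C.id x)

/-- The quotient category `C/G` as a category over `k`. -/
noncomputable def QuotStr.toKCat {k G : Type} [CommRing k] [Group G] {C : kCat k}
    {A : GAction k G C} (Q : QuotStr A) : kCat k where
  Obj := A.QuotObj
  Hom := A.QuotHom
  homAdd := fun _ _ => inferInstance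
  homMod := fun _ _ => inferInstance
  id := Q.id
  comp := Q.comp
  id_comp := Q.id_comp
  comp_id := Q.comp_id
  assoc := Q.assoc
  comp_add_left := Q.comp_add_left
  comp_add_right := Q.comp_add_right
  comp_smul_left := Q.comp_smul_left
  comp_smul_right := Q.comp_smul_right

namespace GAction

variable {k G : Type} [CommRing k] [Group G] {C : kCat k}

/-- The morphism module `⊕_{s ∈ G} Hom_C(s·x, y)` of the skew category `C[G]`. -/
def SkewHom (A : GAction k G C) (x y : C.Obj) : Type :=
  ⨁ s : G, C.Hom (A.smulObj s x) y

noncomputable instance (A : GAction k G C) (x y : C.Obj) : AddCommGroup (A.SkewHom x y) :=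
  inferInstanceAs (AddCommGroup (⨁ s : G, C.Hom (A.smulObj s x) y))

noncomputable instance (A : GAction k G C) (x y : C.Obj) : Module k (A.SkewHom x y) :=
  inferInstanceAs (Module k (⨁ s : G, C.Hom (A.smulObj s x) y))

/-- The morphism `f ∈ Hom_C(s·x, y)` viewed in the `s`-component of
`Hom_{C[G]}(x, y)`. -/
noncomputable def skewSingle (A : GAction k G C) {x y : C.Obj} (s : G)
    (f : C.Hom (A.smulObj s x) y) : A.SkewHom x y :=
  dsSingle (M := fun s : G => C.Hom (A.smulObj s x) y) s f

end GAction

/-- The structure of the skew category `C[G]` of a `G`-category `C` over `k`: it has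
the same objects as `C`, morphism modules `SkewHom x y = ⊕_{s ∈ G} Hom_C(s·x, y)`,
composition determined on components by `g_t ∘ f_s = (g ∘ (t·f))_{ts}`, and identities
given by `(1_x)_1`. -/
structure SkewStr {k G : Type} [CommRing k] [Group G] {C : kCat k} (A : GAction k G C) where
  comp : ∀ {x y z : C.Obj}, A.SkewHom y z → A.SkewHom x y → A.SkewHom x z
  id : ∀ x : C.Obj, A.SkewHom x x
  id_comp : ∀ {x y} (f : A.SkewHom x y), comp (id y) f = f
  comp_id : ∀ {x y} (f : A.SkewHom x y), comp f (id x) = f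
  assoc : ∀ {w x y z} (h : A.SkewHom y z) (g : A.SkewHom x y) (f : A.SkewHom w x),
    comp (comp h g) f = comp h (comp g f)
  comp_add_left : ∀ {x y z} (g g' : A.SkewHom y z) (f : A.SkewHom x y),
    comp (g + g') f = comp g f + comp g' f
  comp_add_right : ∀ {x y z} (g : A.SkewHom y z) (f f' : A.SkewHom x y),
    comp g (f + f') = comp g f + comp g f'
  comp_smul_left : ∀ {x y z} (a : k) (g : A.SkewHom y z) (f : A.SkewHom x y),
    comp (a • g) f = a • comp g f
  comp_smul_right : ∀ {x y z} (a : k) (g : A.SkewHom y z) (f : A.SkewHom x y),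
    comp g (a • f) = a • comp g f
  comp_single : ∀ {x y z : C.Obj} (t s : G)
    (g : C.Hom (A.smulObj t y) z) (f : C.Hom (A.smulObj s x) y),
    comp (A.skewSingle t g) (A.skewSingle s f) =
      A.skewSingle (t * s)
        (C.trans2 (A.mul_smulObj t s x).symm rfl (C.comp g (A.smulHom t _ _ f)))
  id_single : ∀ x : C.Obj,
    id x = A.skewSingle 1 (C.trans2 (A.one_smulObj x).symm rfl (C.id x))

/-- The skew category `C[G]` as a category over `k`. -/
noncomputable def SkewStr.toKCat {k G : Type} [CommRing k] [Group G] {C : kCat k}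
    {A : GAction k G C} (S : SkewStr A) : kCat k where
  Obj := C.Obj
  Hom := A.SkewHom
  homAdd := fun _ _ => inferInstance
  homMod := fun _ _ => inferInstance
  id := S.id
  comp := S.comp
  id_comp := S.id_comp
  comp_id := S.comp_id
  assoc := S.assoc
  comp_add_left := S.comp_add_left
  comp_add_right := S.comp_add_right
  comp_smul_left := S.comp_smul_left
  comp_smul_right := S.comp_smul_right

/-! Gradings of a category over `k` by a group, and the smash product category. -/

/-- A `G`-grading of a category `B` over `k`: each morphism module decomposes as a
direct sum `Hom(x,y) = ⊕_{s ∈ G} Hom^s(x,y)` with `Hom^t ∘ Hom^s ⊆ Hom^{ts}`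
and identities in degree `1`. -/
structure Grading (k G : Type) [CommRing k] [Group G] (B : kCat k) where
  deg : G → ∀ x y : B.Obj, Submodule k (B.Hom x y)
  internal : ∀ x y : B.Obj, SubmodulesInternal k (fun s => deg s x y)
  comp_mem : ∀ {x y z : B.Obj} {s t : G} {g : B.Hom y z} {f : B.Hom x y},
    g ∈ deg t y z → f ∈ deg s x y → B.comp g f ∈ deg (t * s) x z
  id_mem : ∀ x : B.Obj, B.id x ∈ deg 1 x x

/-- A small helper: elements of equal submodules with equal values are heterogeneously
equal. -/
theorem Submodule.heq_mk {k M : Type} [CommRing k] [AddCommGroup M] [Module k M]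
    {p q : Submodule k M} (h : p = q) (v : M) (hp : v ∈ p) (hq : v ∈ q) :
    HEq (⟨v, hp⟩ : p) (⟨v, hq⟩ : q) := by subst h; rfl

/-- The smash product category `B#G` of a `G`-graded category `B` over `k`:
objects are pairs `(x, s)` with `x` an object of `B` and `s ∈ G`, and
`Hom((x,s),(y,t)) = Hom_B^{t⁻¹s}(x, y)`, with composition induced by the graded
composition of `B`. -/
def smashCat {k G : Type} [CommRing k] [Group G] (B : kCat k) (gr : Grading k G B) :
    kCat k where
  Obj := B.Obj × G
  Hom := fun p q => ↥(gr.deg (q.2⁻¹ * p.2) p.1 q.1)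
  homAdd := fun _ _ => inferInstance
  homMod := fun _ _ => inferInstance
  id := fun p => ⟨B.id p.1, by rw [inv_mul_cancel]; exact gr.id_mem p.1⟩
  comp := fun {p q r} g f => ⟨B.comp g.1 f.1, by
    have h : (r.2⁻¹ * q.2) * (q.2⁻¹ * p.2) = r.2⁻¹ * p.2 := by group
    rw [← h]; exact gr.comp_mem g.2 f.2⟩
  id_comp := fun f => Subtype.ext (B.id_comp f.1)
  comp_id := fun f => Subtype.ext (B.comp_id f.1)
  assoc := fun h g f => Subtype.ext (B.assoc h.1 g.1 f.1)
  comp_add_left := fun g g' f => Subtype.ext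
    (by simpa using B.comp_add_left g.1 g'.1 f.1)
  comp_add_right := fun g f f' => Subtype.ext
    (by simpa using B.comp_add_right g.1 f.1 f'.1)
  comp_smul_left := fun a g f => Subtype.ext
    (by simpa using B.comp_smul_left a g.1 f.1)
  comp_smul_right := fun a g f => Subtype.ext
    (by simpa using B.comp_smul_right a g.1 f.1)

/-- The canonical (free) action of `G` on the smash product category `B#G`:
`u · (x, s) = (x, us)` on objects, identity on the morphism components. -/
def smashAction {k G : Type} [CommRing k] [Group G] (B : kCat k) (gr : Grading k G B) :
    GAction k G (smashCat B gr) where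
  smulObj := fun u p => (p.1, u * p.2)
  one_smulObj := fun p => by cases p; simp <;> rfl
  mul_smulObj := fun s t p => by cases p; simp [mul_assoc] <;> rfl
  smulHom := fun u p q =>
    letI : ∀ x y : B.Obj × G, AddCommGroup ((smashCat B gr).Hom x y) :=
      fun x y => (smashCat B gr).homAdd x y
    letI : ∀ x y : B.Obj × G, Module k ((smashCat B gr).Hom x y) :=
      fun x y => (smashCat B gr).homMod x y
    { toFun := fun f => ⟨f.1, by
        have h : ((u * q.2)⁻¹ * (u * p.2)) = q.2⁻¹ * p.2 := by group
        rw [h]; exact f.2⟩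
      map_add' := fun f g => rfl
      map_smul' := fun a f => rfl }
  smulHom_comp := fun s {p q r} g f => Subtype.ext rfl
  smulHom_id := fun s p => Subtype.ext rfl
  one_smulHom := fun {p q} f => by
    have h : gr.deg (((1 : G) * q.2)⁻¹ * ((1 : G) * p.2)) p.1 q.1
        = gr.deg (q.2⁻¹ * p.2) p.1 q.1 := by rw [one_mul, one_mul]
    exact Submodule.heq_mk h f.1 (h.symm ▸ f.2) f.2
  mul_smulHom := fun s t {p q} f => by
    have e1 : s * t * q.2 = s * (t * q.2) := mul_assoc s t q.2
    have e2 : s * t * p.2 = s * (t * p.2) := mul_assoc s t p.2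
    have h : gr.deg ((s * t * q.2)⁻¹ * (s * t * p.2)) p.1 q.1
        = gr.deg ((s * (t * q.2))⁻¹ * (s * (t * p.2))) p.1 q.1 := by rw [e1, e2]
    have hmem : f.1 ∈ gr.deg ((s * (t * q.2))⁻¹ * (s * (t * p.2))) p.1 q.1 := by
      have h2 : ((s * (t * q.2))⁻¹ * (s * (t * p.2))) = q.2⁻¹ * p.2 := by group
      rw [h2]; exact f.2
    exact Submodule.heq_mk h f.1 (h ▸ hmem) hmem

/-- The Galois covering (projection) functor `B#G → B`, `(x,s) ↦ x` on objects and the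
inclusion of the degree component on morphisms. -/
def smashProjFunctor {k G : Type} [CommRing k] [Group G] (B : kCat k)
    (gr : Grading k G B) : kFunctor k (smashCat B gr) B where
  obj := fun p => p.1
  map := fun p q => (gr.deg (q.2⁻¹ * p.2) p.1 q.1).subtype
  map_id := fun _ => rfl
  map_comp := fun _ _ => rfl


section SmashSkew

variable {k G : Type} [CommRing k] [Group G]

/-- Elements of equal submodules with equal underlying values are heterogeneously equal. -/
theorem subHeq {M : Type} [AddCommGroup M] [Module k M]
    {p q : Submodule k M} (hpq : p = q) (a : ↥p) (b : ↥q) (h : a.1 = b.1) :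
    HEq a b := by subst hpq; exact heq_of_eq (Subtype.ext h)

theorem trans2_heq (C : kCat k) {x x' y y' : C.Obj}
    (hx : x = x') (hy : y = y') (f : C.Hom x y) : HEq (C.trans2 hx hy f) f :=
  cast_heq _ f

theorem skewSingle_congr {C : kCat k} {A : GAction k G C} {p q : C.Obj}
    {u u' : G} (h : u = u') {f : C.Hom (A.smulObj u p) q} {f' : C.Hom (A.smulObj u' p) q}
    (hf : HEq f f') : A.skewSingle u f = A.skewSingle u' f' := by
  subst h; rw [eq_of_heq hf]

variable (B : kCat k) (gr : Grading k G B)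

instance smashHomAdd1 (x : B.Obj × G) (y : B.Obj × G) : AddCommGroup ((smashCat B gr).Hom x y) :=
  (smashCat B gr).homAdd x y

instance smashHomMod1 (x : B.Obj × G) (y : B.Obj × G) : Module k ((smashCat B gr).Hom x y) :=
  (smashCat B gr).homMod x y

instance smashHomAdd2 (x : B.Obj × G) (y : (smashCat B gr).Obj) : AddCommGroup ((smashCat B gr).Hom x y) :=
  (smashCat B gr).homAdd x y

instance smashHomMod2 (x : B.Obj × G) (y : (smashCat B gr).Obj) : Module k ((smashCat B gr).Hom x y) :=
  (smashCat B gr).homMod x y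

instance smashHomAdd3 (x : (smashCat B gr).Obj) (y : B.Obj × G) : AddCommGroup ((smashCat B gr).Hom x y) :=
  (smashCat B gr).homAdd x y

instance smashHomMod3 (x : (smashCat B gr).Obj) (y : B.Obj × G) : Module k ((smashCat B gr).Hom x y) :=
  (smashCat B gr).homMod x y

instance smashHomAdd4 (x : (smashCat B gr).Obj) (y : (smashCat B gr).Obj) : AddCommGroup ((smashCat B gr).Hom x y) :=
  (smashCat B gr).homAdd x y

instance smashHomMod4 (x : (smashCat B gr).Obj) (y : (smashCat B gr).Obj) : Module k ((smashCat B gr).Hom x y) :=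
  (smashCat B gr).homMod x y

noncomputable instance smashSkewAdd (x y : B.Obj × G) :
    AddCommGroup ((smashAction B gr).SkewHom x y) :=
  @GAction.instAddCommGroupSkewHom k G _ _ (smashCat B gr) (smashAction B gr) x y

noncomputable instance smashSkewMod (x y : B.Obj × G) :
    Module k ((smashAction B gr).SkewHom x y) :=
  @GAction.instModuleSkewHom k G _ _ (smashCat B gr) (smashAction B gr) x y

/-- The functor `(B#G)[G] → B` on morphisms: sum of the degree-component inclusions. -/
noncomputable def smashSkewF (p q : B.Obj × G) :
    (smashAction B gr).SkewHom p q →ₗ[k] B.Hom p.1 q.1 :=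
  letI := Classical.decEq G
  DirectSum.toModule
    (M := fun u => (smashCat B gr).Hom ((smashAction B gr).smulObj u p) q)
    k G (B.Hom p.1 q.1)
    (fun u => (gr.deg (q.2⁻¹ * (u * p.2)) p.1 q.1).subtype)

theorem smashSkewF_single (p q : B.Obj × G) (u : G)
    (f : (smashCat B gr).Hom ((smashAction B gr).smulObj u p) q) :
    smashSkewF B gr p q ((smashAction B gr).skewSingle u f) = f.1 := by
  letI := Classical.decEq G
  exact DirectSum.toModule_lof
    (φ := fun u => (gr.deg (q.2⁻¹ * (u * p.2)) p.1 q.1).subtype) k u f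

/-- The graded-sum linear map `⊕_w deg w x y → Hom(x,y)`. -/
noncomputable def gradedSum (x y : B.Obj) :
    (⨁ w : G, ↥(gr.deg w x y)) →ₗ[k] B.Hom x y :=
  letI := Classical.decEq G
  DirectSum.toModule k G (B.Hom x y) (fun w => (gr.deg w x y).subtype)

theorem gradedSum_bij (x y : B.Obj) : Function.Bijective (gradedSum B gr x y) :=
  gr.internal x y

/-- The graded-sum as a linear equivalence. -/
noncomputable def gradedEquiv (x y : B.Obj) :
    (⨁ w : G, ↥(gr.deg w x y)) ≃ₗ[k] B.Hom x y :=
  LinearEquiv.ofBijective (gradedSum B gr x y) (gradedSum_bij B gr x y)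

theorem gradedSum_single (x y : B.Obj) (w : G) (a : ↥(gr.deg w x y)) :
    gradedSum B gr x y (dsSingle w a) = a.1 := by
  letI := Classical.decEq G
  exact DirectSum.toModule_lof (φ := fun w => (gr.deg w x y).subtype) k w a

theorem gradedEquiv_single (x y : B.Obj) (w : G) (a : ↥(gr.deg w x y)) :
    gradedEquiv B gr x y (dsSingle w a) = a.1 := by
  rw [gradedEquiv, LinearEquiv.ofBijective_apply, gradedSum_single]

theorem gradedEquiv_symm_single (x y : B.Obj) (w : G) (v : B.Hom x y)
    (hv : v ∈ gr.deg w x y) :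
    (gradedEquiv B gr x y).symm v = dsSingle w ⟨v, hv⟩ := by
  rw [LinearEquiv.symm_apply_eq, gradedEquiv_single]

/-- Reindexing `⊕_w deg w x y` into the skew-hom module `SkewHom (x,1) (y,1)`. -/
noncomputable def reIdx (x y : B.Obj) :
    (⨁ w : G, ↥(gr.deg w x y)) ≃ₗ[k] (smashAction B gr).SkewHom (x, (1:G)) (y, (1:G)) :=
  DFinsupp.mapRange.linearEquiv
    (β₂ := fun w => (smashCat B gr).Hom ((smashAction B gr).smulObj w (x, (1:G))) (y, (1:G)))
    (fun w => LinearEquiv.ofEq (gr.deg w x y) _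
      (by show gr.deg w x y = gr.deg ((1:G)⁻¹ * (w * 1)) x y
          rw [show (1:G)⁻¹ * (w * 1) = w by group]))

theorem reIdx_single (x y : B.Obj) (w : G) (a : ↥(gr.deg w x y)) :
    reIdx B gr x y (dsSingle w a) =
      (smashAction B gr).skewSingle (x := (x, (1:G))) (y := (y, (1:G))) w
        (⟨a.1, by rw [show (1:G)⁻¹ * (w * 1) = w by group]; exact a.2⟩ :
          ↥(gr.deg ((1:G)⁻¹ * (w * 1)) x y)) := by
  letI := Classical.decEq G
  unfold reIdx dsSingle
  erw [DFinsupp.mapRange.linearEquiv_apply, DFinsupp.mapRange_single]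
  rfl

/-- The functor `B → (B#G)[G]` on morphisms. -/
noncomputable def smashSkewG (x y : B.Obj) :
    B.Hom x y →ₗ[k] (smashAction B gr).SkewHom (x, (1:G)) (y, (1:G)) :=
  (reIdx B gr x y).toLinearMap.comp (gradedEquiv B gr x y).symm.toLinearMap

theorem smashSkewG_apply (x y : B.Obj) (w : G) (v : B.Hom x y) (hv : v ∈ gr.deg w x y) :
    smashSkewG B gr x y v =
      (smashAction B gr).skewSingle (x := (x, (1:G))) (y := (y, (1:G))) w
        (⟨v, by rw [show (1:G)⁻¹ * (w * 1) = w by group]; exact hv⟩ :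
          ↥(gr.deg ((1:G)⁻¹ * (w * 1)) x y)) := by
  unfold smashSkewG
  rw [LinearMap.comp_apply, LinearEquiv.coe_coe, LinearEquiv.coe_coe,
    gradedEquiv_symm_single B gr x y w v hv, reIdx_single]

theorem smashSkewFG (x y : B.Obj) (v : B.Hom x y) :
    smashSkewF B gr (x, (1:G)) (y, (1:G)) (smashSkewG B gr x y v) = v := by
  have h1 : (smashSkewF B gr (x,(1:G)) (y,(1:G))).comp (reIdx B gr x y).toLinearMap
      = gradedSum B gr x y := by
    letI := Classical.decEq G
    apply DFinsupp.lhom_ext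
    intro w a
    rw [LinearMap.comp_apply, LinearEquiv.coe_coe]
    rw [show (DFinsupp.single w a : Π₀ w : G, ↥(gr.deg w x y))
        = dsSingle (M := fun w => ↥(gr.deg w x y)) w a from rfl]
    erw [reIdx_single, smashSkewF_single, gradedSum_single]
  unfold smashSkewG
  rw [LinearMap.comp_apply, LinearEquiv.coe_coe, LinearEquiv.coe_coe]
  have h2 := LinearMap.congr_fun h1 ((gradedEquiv B gr x y).symm v)
  rw [LinearMap.comp_apply, LinearEquiv.coe_coe] at h2
  rw [h2]
  exact (gradedEquiv B gr x y).apply_symm_apply v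

theorem heq_val {M : Type} [AddCommGroup M] [Module k M] {p q : Submodule k M}
    (hpq : p = q) {a : ↥p} {b : ↥q} (h : HEq a b) : a.1 = b.1 := by
  subst hpq; rw [eq_of_heq h]

/-- Extensionality for linear maps out of a hom-module of `B`, reduced to graded parts. -/
theorem ext_graded {x y : B.Obj} {N : Type} [AddCommGroup N] [Module k N]
    (L1 L2 : B.Hom x y →ₗ[k] N)
    (h : ∀ (w : G) (v : B.Hom x y), v ∈ gr.deg w x y → L1 v = L2 v) : L1 = L2 := by
  letI := Classical.decEq G
  have key : L1.comp (gradedEquiv B gr x y).toLinearMap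
      = L2.comp (gradedEquiv B gr x y).toLinearMap := by
    apply DFinsupp.lhom_ext
    intro w a
    rw [LinearMap.comp_apply, LinearMap.comp_apply, LinearEquiv.coe_coe]
    erw [gradedEquiv_single]
    exact h w a.1 a.2
  apply LinearMap.ext; intro v
  obtain ⟨d, rfl⟩ := (gradedEquiv B gr x y).surjective v
  exact LinearMap.congr_fun key d

/-- Extensionality for linear maps out of a skew hom-module, reduced to singles. -/
theorem ext_skew {p q : B.Obj × G} {N : Type} [AddCommGroup N] [Module k N]
    (L1 L2 : (smashAction B gr).SkewHom p q →ₗ[k] N)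
    (h : ∀ (u : G) (f : (smashCat B gr).Hom ((smashAction B gr).smulObj u p) q),
      L1 ((smashAction B gr).skewSingle u f) = L2 ((smashAction B gr).skewSingle u f)) :
    L1 = L2 := by
  letI := Classical.decEq G
  exact DFinsupp.lhom_ext h

variable (S : SkewStr (smashAction B gr))

/-- Left composition in the skew category as a linear map. -/
noncomputable def compL {p q r : B.Obj × G} (g : (smashAction B gr).SkewHom q r) :
    (smashAction B gr).SkewHom p q →ₗ[k] (smashAction B gr).SkewHom p r where
  toFun := S.comp g
  map_add' := fun f f' => S.comp_add_right g f f'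
  map_smul' := fun a f => S.comp_smul_right a g f

/-- Right composition in the skew category as a linear map. -/
noncomputable def compR {p q r : B.Obj × G} (f : (smashAction B gr).SkewHom p q) :
    (smashAction B gr).SkewHom q r →ₗ[k] (smashAction B gr).SkewHom p r where
  toFun := fun g => S.comp g f
  map_add' := fun g g' => S.comp_add_left g g' f
  map_smul' := fun a g => S.comp_smul_left a g f

/-- Left composition in `B` as a linear map. -/
noncomputable def BcompL {x y z : B.Obj} (g : B.Hom y z) : B.Hom x y →ₗ[k] B.Hom x z where
  toFun := fun f => B.comp g f
  map_add' := fun f f' => B.comp_add_right g f f'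
  map_smul' := fun a f => B.comp_smul_right a g f

/-- Right composition in `B` as a linear map. -/
noncomputable def BcompR {x y z : B.Obj} (f : B.Hom x y) : B.Hom y z →ₗ[k] B.Hom x z where
  toFun := fun g => B.comp g f
  map_add' := fun g g' => B.comp_add_left g g' f
  map_smul' := fun a g => B.comp_smul_left a g f

theorem F_id (p : B.Obj × G) : smashSkewF B gr p p (S.id p) = B.id p.1 := by
  rw [S.id_single p]
  erw [smashSkewF_single]
  exact heq_val
    (by show gr.deg (p.2⁻¹ * (1 * p.2)) p.1 p.1 = gr.deg (p.2⁻¹ * p.2) p.1 p.1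
        rw [one_mul])
    (trans2_heq (smashCat B gr) ((smashAction B gr).one_smulObj p).symm rfl
      ((smashCat B gr).id p))

theorem F_comp {p q r : B.Obj × G} (g : (smashAction B gr).SkewHom q r)
    (f : (smashAction B gr).SkewHom p q) :
    smashSkewF B gr p r (S.comp g f)
      = B.comp (smashSkewF B gr q r g) (smashSkewF B gr p q f) := by
  have key : (smashSkewF B gr p r).comp (compL B gr S g)
      = (BcompL B (smashSkewF B gr q r g)).comp (smashSkewF B gr p q) := by
    apply ext_skew
    intro v ff
    show smashSkewF B gr p r (S.comp g ((smashAction B gr).skewSingle v ff))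
      = B.comp (smashSkewF B gr q r g)
          (smashSkewF B gr p q ((smashAction B gr).skewSingle v ff))
    have key2 : (smashSkewF B gr p r).comp (compR B gr S ((smashAction B gr).skewSingle v ff))
        = (BcompR B (smashSkewF B gr p q ((smashAction B gr).skewSingle v ff))).comp
            (smashSkewF B gr q r) := by
      apply ext_skew
      intro u gg
      show smashSkewF B gr p r
          (S.comp ((smashAction B gr).skewSingle u gg) ((smashAction B gr).skewSingle v ff))
        = B.comp (smashSkewF B gr q r ((smashAction B gr).skewSingle u gg))
            (smashSkewF B gr p q ((smashAction B gr).skewSingle v ff))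
      rw [S.comp_single (x := p) (y := q) (z := r)]
      erw [smashSkewF_single, smashSkewF_single, smashSkewF_single]
      exact heq_val
        (by show gr.deg (r.2⁻¹ * (u * v * p.2)) p.1 r.1
              = gr.deg (r.2⁻¹ * (u * (v * p.2))) p.1 r.1
            rw [mul_assoc u v p.2])
        (trans2_heq (smashCat B gr) ((smashAction B gr).mul_smulObj u v p).symm rfl
          ((smashCat B gr).comp gg ((smashAction B gr).smulHom u _ _ ff)))
    exact LinearMap.congr_fun key2 g
  exact LinearMap.congr_fun key f

theorem G_id (x : B.Obj) : smashSkewG B gr x x (B.id x) = S.id (x, (1:G)) := by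
  rw [smashSkewG_apply B gr x x 1 (B.id x) (gr.id_mem x), S.id_single (x, (1:G))]
  refine skewSingle_congr (C := smashCat B gr) (A := smashAction B gr)
    (show (1:G) = 1 from rfl) ?_
  refine HEq.trans ?_ (trans2_heq _ _ _ _).symm
  refine subHeq ?_ _ _ rfl
  show gr.deg ((1:G)⁻¹ * (1 * 1)) x x = gr.deg ((1:G)⁻¹ * 1) x x
  rw [one_mul]

theorem G_comp {x y z : B.Obj} (g : B.Hom y z) (f : B.Hom x y) :
    smashSkewG B gr x z (B.comp g f)
      = S.comp (smashSkewG B gr y z g) (smashSkewG B gr x y f) := by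
  have key : (smashSkewG B gr x z).comp (BcompL B g)
      = (compL B gr S (smashSkewG B gr y z g)).comp (smashSkewG B gr x y) := by
    apply ext_graded B gr
    intro w v hv
    show smashSkewG B gr x z (B.comp g v)
      = S.comp (smashSkewG B gr y z g) (smashSkewG B gr x y v)
    have key2 : (smashSkewG B gr x z).comp (BcompR B v)
        = (compR B gr S (smashSkewG B gr x y v)).comp (smashSkewG B gr y z) := by
      apply ext_graded B gr
      intro u b hb
      show smashSkewG B gr x z (B.comp b v)
        = S.comp (smashSkewG B gr y z b) (smashSkewG B gr x y v)
      rw [smashSkewG_apply B gr y z u b hb, smashSkewG_apply B gr x y w v hv,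
        smashSkewG_apply B gr x z (u * w) (B.comp b v) (gr.comp_mem hb hv)]
      erw [S.comp_single (x := (x, (1:G))) (y := (y, (1:G))) (z := (z, (1:G)))]
      refine skewSingle_congr rfl ?_
      refine HEq.trans ?_ (trans2_heq _ _ _ _).symm
      refine subHeq ?_ _ _ rfl
      show gr.deg ((1:G)⁻¹ * (u * w * 1)) x z = gr.deg ((1:G)⁻¹ * (u * (w * 1))) x z
      rw [mul_assoc u w 1]
    exact LinearMap.congr_fun key2 g
  exact LinearMap.congr_fun key f

/-- The unit component `(x,s) → (x,1)` of the equivalence. -/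
noncomputable def etaApp (p : B.Obj × G) : (smashAction B gr).SkewHom p (p.1, (1:G)) :=
  (smashAction B gr).skewSingle (x := p) (y := (p.1, (1:G))) p.2⁻¹
    (⟨B.id p.1, by rw [show ((1:G))⁻¹ * (p.2⁻¹ * p.2) = 1 by group]; exact gr.id_mem p.1⟩ :
      ↥(gr.deg ((1:G)⁻¹ * (p.2⁻¹ * p.2)) p.1 p.1))

/-- The inverse unit component `(x,1) → (x,s)` of the equivalence. -/
noncomputable def epsApp (p : B.Obj × G) : (smashAction B gr).SkewHom (p.1, (1:G)) p :=
  (smashAction B gr).skewSingle (x := (p.1, (1:G))) (y := p) p.2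
    (⟨B.id p.1, by rw [show p.2⁻¹ * (p.2 * 1) = 1 by group]; exact gr.id_mem p.1⟩ :
      ↥(gr.deg (p.2⁻¹ * (p.2 * 1)) p.1 p.1))

theorem eps_eta (p : B.Obj × G) : S.comp (epsApp B gr p) (etaApp B gr p) = S.id p := by
  rw [S.id_single p]
  unfold epsApp etaApp
  erw [S.comp_single (x := p) (y := (p.1, (1:G))) (z := p)]
  refine skewSingle_congr (by group) ?_
  refine (trans2_heq _ _ _ _).trans (HEq.trans ?_ (trans2_heq _ _ _ _).symm)
  refine subHeq ?_ _ _ ?_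
  · show gr.deg (p.2⁻¹ * (p.2 * (p.2⁻¹ * p.2))) p.1 p.1 = gr.deg (p.2⁻¹ * p.2) p.1 p.1
    rw [show p.2⁻¹ * (p.2 * (p.2⁻¹ * p.2)) = p.2⁻¹ * p.2 by group]
  · show B.comp (B.id p.1) (B.id p.1) = B.id p.1
    rw [B.id_comp]

theorem eta_eps (p : B.Obj × G) :
    S.comp (etaApp B gr p) (epsApp B gr p) = S.id (p.1, (1:G)) := by
  rw [S.id_single (p.1, (1:G))]
  unfold epsApp etaApp
  erw [S.comp_single (x := (p.1, (1:G))) (y := p) (z := (p.1, (1:G)))]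
  refine skewSingle_congr (by group) ?_
  refine (trans2_heq _ _ _ _).trans (HEq.trans ?_ (trans2_heq _ _ _ _).symm)
  refine subHeq ?_ _ _ ?_
  · show gr.deg ((1:G)⁻¹ * (p.2⁻¹ * (p.2 * 1))) p.1 p.1 = gr.deg ((1:G)⁻¹ * 1) p.1 p.1
    rw [show (1:G)⁻¹ * (p.2⁻¹ * (p.2 * 1)) = (1:G)⁻¹ * 1 by group]
  · show B.comp (B.id p.1) (B.id p.1) = B.id p.1
    rw [B.id_comp]

theorem eta_nat {p q : B.Obj × G} (f : (smashAction B gr).SkewHom p q) :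
    S.comp (etaApp B gr q) f
      = S.comp (smashSkewG B gr p.1 q.1 (smashSkewF B gr p q f)) (etaApp B gr p) := by
  have key : compL B gr S (etaApp B gr q)
      = ((compR B gr S (etaApp B gr p)).comp
          ((smashSkewG B gr p.1 q.1).comp (smashSkewF B gr p q))) := by
    apply ext_skew
    intro u g
    show S.comp (etaApp B gr q) ((smashAction B gr).skewSingle u g)
      = S.comp (smashSkewG B gr p.1 q.1
          (smashSkewF B gr p q ((smashAction B gr).skewSingle u g))) (etaApp B gr p)
    erw [smashSkewF_single]
    rw [smashSkewG_apply B gr p.1 q.1 (q.2⁻¹ * (u * p.2)) g.1 g.2]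
    unfold etaApp
    erw [S.comp_single (x := p) (y := q) (z := (q.1, (1:G))),
      S.comp_single (x := p) (y := (p.1, (1:G))) (z := (q.1, (1:G)))]
    refine skewSingle_congr (by group) ?_
    refine (trans2_heq _ _ _ _).trans (HEq.trans ?_ (trans2_heq _ _ _ _).symm)
    refine subHeq ?_ _ _ ?_
    · show gr.deg ((1:G)⁻¹ * (q.2⁻¹ * (u * p.2))) p.1 q.1
        = gr.deg ((1:G)⁻¹ * (q.2⁻¹ * (u * p.2) * (p.2⁻¹ * p.2))) p.1 q.1
      rw [show (1:G)⁻¹ * (q.2⁻¹ * (u * p.2))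
        = (1:G)⁻¹ * (q.2⁻¹ * (u * p.2) * (p.2⁻¹ * p.2)) by group]
    · show B.comp (B.id q.1) g.1 = B.comp g.1 (B.id p.1)
      erw [B.id_comp, B.comp_id]
  exact LinearMap.congr_fun key f

theorem eps_nat {p q : B.Obj × G} (f : (smashAction B gr).SkewHom p q) :
    S.comp (epsApp B gr q) (smashSkewG B gr p.1 q.1 (smashSkewF B gr p q f))
      = S.comp f (epsApp B gr p) := by
  have key : ((compL B gr S (epsApp B gr q)).comp
        ((smashSkewG B gr p.1 q.1).comp (smashSkewF B gr p q)))
      = compR B gr S (epsApp B gr p) := by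
    apply ext_skew
    intro u g
    show S.comp (epsApp B gr q) (smashSkewG B gr p.1 q.1
          (smashSkewF B gr p q ((smashAction B gr).skewSingle u g)))
      = S.comp ((smashAction B gr).skewSingle u g) (epsApp B gr p)
    erw [smashSkewF_single]
    rw [smashSkewG_apply B gr p.1 q.1 (q.2⁻¹ * (u * p.2)) g.1 g.2]
    unfold epsApp
    erw [S.comp_single (x := (p.1, (1:G))) (y := (q.1, (1:G))) (z := q),
      S.comp_single (x := (p.1, (1:G))) (y := p) (z := q)]
    refine skewSingle_congr (by group) ?_
    refine (trans2_heq _ _ _ _).trans (HEq.trans ?_ (trans2_heq _ _ _ _).symm)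
    refine subHeq ?_ _ _ ?_
    · show gr.deg (q.2⁻¹ * (q.2 * (q.2⁻¹ * (u * p.2) * 1))) p.1 q.1
        = gr.deg (q.2⁻¹ * (u * (p.2 * 1))) p.1 q.1
      rw [show q.2⁻¹ * (q.2 * (q.2⁻¹ * (u * p.2) * 1)) = q.2⁻¹ * (u * (p.2 * 1)) by group]
    · show B.comp (B.id q.1) g.1 = B.comp g.1 (B.id p.1)
      erw [B.id_comp, B.comp_id]
  exact LinearMap.congr_fun key f

end SmashSkew

/-- **Corollary (Cibils–Marcos).** Let `G` be a group and `B` a `G`-graded category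
over `k`. Then the skew category `(B#G)[G]` of the smash product category `B#G`
(endowed with its canonical free `G`-action) is equivalent to `B`. -/
theorem smash_skew_equiv_base (k G : Type) [CommRing k] [Group G]
    (B : kCat k) (gr : Grading k G B) (S : SkewStr (smashAction B gr)) :
    Nonempty (kEquivalence k S.toKCat B) := by
  exact ⟨{
    F := { obj := fun p => p.1
           map := fun p q => smashSkewF B gr p q
           map_id := fun p => F_id B gr S p
           map_comp := fun g f => F_comp B gr S g f }
    G := { obj := fun x => (x, (1:G))
           map := fun x y => smashSkewG B gr x y
           map_id := fun x => G_id B gr S x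
           map_comp := fun g f => G_comp B gr S g f }
    unitIso := {
      hom := { app := fun p => etaApp B gr p
               naturality := fun f => eta_nat B gr S f }
      inv := { app := fun p => epsApp B gr p
               naturality := fun f => eps_nat B gr S f }
      hom_inv := fun p => eps_eta B gr S p
      inv_hom := fun p => eta_eps B gr S p }
    counitIso := {
      hom := { app := fun x => B.id x
               naturality := fun {x y} f => by
                 show B.comp (B.id y)
                     (smashSkewF B gr (x,(1:G)) (y,(1:G)) (smashSkewG B gr x y f))
                   = B.comp f (B.id x)
                 rw [smashSkewFG, B.id_comp, B.comp_id] }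
      inv := { app := fun x => B.id x
               naturality := fun {x y} f => by
                 show B.comp (B.id y) f
                   = B.comp (smashSkewF B gr (x,(1:G)) (y,(1:G)) (smashSkewG B gr x y f))
                       (B.id x)
                 rw [smashSkewFG, B.id_comp, B.comp_id] }
      hom_inv := fun x => by
        show B.comp (B.id x) (B.id x) = B.id x
        rw [B.id_comp]
      inv_hom := fun x => by
        show B.comp (B.id x) (B.id x) = B.id x
        rw [B.id_comp] } }⟩
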